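/- arXiv:0802.1577 — 2 statements merged into one kernel-verified Lean document; each statement's English description precedes it below -/
import Mathlib

section
/- Let m satisfy 1 < m < 5/3, T > Z²/(4m), Z > 0, and g(λ) = min{(-λ/m)^{1/(m-1)}, 1} for λ < 0, g = 0 otherwise. Then ∑_{j≥1} j² g(-Z²/(4 T j²)) = (Z²/(4Tm))^{1/(m-1)} · ζ(2(m-2)/(m-1)), where ζ is the Riemann zeta function, and this sum is finite. -/
/-! For T > Z²/(4m) the argument of the minimum in g stays below 1, so the j-th term equals
(Z²/(4Tm))^{1/(m-1)} · j^{2 - 2/(m-1)}; the exponent 2 - 2/(m-1) = -2(2-m)/(m-1) is below -1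
exactly when m < 5/3, and the sum is then a multiple of ζ(2(2-m)/(m-1)). -/

open Real

lemma summable_pnat_rpow_neg {s : ℝ} (hs : 1 < s) : Summable fun j : ℕ+ => (j : ℝ) ^ (-s) :=
  summable_pnat_iff_summable_nat.mpr (Real.summable_nat_rpow.mpr (by linarith))

lemma ofReal_tsum_pnat_rpow_neg {s : ℝ} (hs : 1 < s) :
    ((∑' j : ℕ+, (j : ℝ) ^ (-s) : ℝ) : ℂ) = riemannZeta s := by
  have hs' : 1 < (s : ℂ).re := by simpa using hs
  rw [zeta_eq_tsum_one_div_nat_cpow hs',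
    ← tsum_zero_pnat_eq_tsum_nat (Complex.summable_one_div_nat_cpow.mpr hs'),
    Complex.ofReal_tsum]
  simp [Complex.zero_cpow (Complex.ne_zero_of_one_lt_re hs'), Complex.ofReal_cpow, Complex.cpow_neg]

lemma sq_mul_min_rpow_div_sq_one {c p x : ℝ} (hc0 : 0 ≤ c) (hc1 : c ≤ 1) (hp : 0 ≤ p)
    (hx : 1 ≤ x) : x ^ 2 * min ((c / x ^ 2) ^ p) 1 = c ^ p * x ^ (-(2 * p - 2)) := by
  have hx0 : 0 < x := by linarith
  have hle : (c / x ^ 2) ^ p ≤ 1 :=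
    rpow_le_one (by positivity) (div_le_one_of_le₀ (by nlinarith) (by positivity)) hp
  rw [min_eq_left hle, div_rpow hc0 (by positivity), ← rpow_natCast, ← rpow_mul hx0.le,
    neg_sub, rpow_sub hx0]
  push_cast
  field_simp

theorem stmt_5_general (m T Z : ℝ) (hm1 : 1 < m) (hm53 : m < 5 / 3) (hZ : 0 < Z)
    (hT : Z ^ 2 / (4 * m) < T) (g : ℝ → ℝ)
    (hg_neg : ∀ lam : ℝ, lam < 0 → g lam = min ((-lam / m) ^ (1 / (m - 1))) 1) :
    Summable (fun j : ℕ+ => (j : ℝ) ^ 2 * g (-Z ^ 2 / (4 * T * (j : ℝ) ^ 2))) ∧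
    ((∑' j : ℕ+, (j : ℝ) ^ 2 * g (-Z ^ 2 / (4 * T * (j : ℝ) ^ 2)) : ℝ) : ℂ)
      = ((((Z ^ 2 / (4 * T * m)) ^ (1 / (m - 1)) : ℝ)) : ℂ)
        * riemannZeta ((2 * (2 - m) / (m - 1) : ℝ) : ℂ) := by
  have hm : 0 < m - 1 := by linarith
  have hT0 : 0 < T := lt_trans (by positivity) hT
  have hs : 1 < 2 * (2 - m) / (m - 1) := by rw [lt_div_iff₀ hm]; linarith
  have hc : Z ^ 2 / (4 * T * m) ≤ 1 := by
    rw [div_lt_iff₀ (by positivity)] at hT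
    rw [div_le_one (by positivity)]
    linarith
  have hterm (j : ℕ+) : (j : ℝ) ^ 2 * g (-Z ^ 2 / (4 * T * (j : ℝ) ^ 2)) =
      (Z ^ 2 / (4 * T * m)) ^ (1 / (m - 1)) * (j : ℝ) ^ (-(2 * (2 - m) / (m - 1))) := by
    have hj : (1 : ℝ) ≤ j := Nat.one_le_cast.mpr j.pos
    have hlam : -Z ^ 2 / (4 * T * (j : ℝ) ^ 2) < 0 :=
      div_neg_of_neg_of_pos (by nlinarith) (by positivity)
    have harg : -(-Z ^ 2 / (4 * T * (j : ℝ) ^ 2)) / m = Z ^ 2 / (4 * T * m) / (j : ℝ) ^ 2 := by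
      field_simp
    rw [hg_neg _ hlam, harg, sq_mul_min_rpow_div_sq_one (by positivity) hc (by positivity) hj]
    congr 3
    field_simp
    ring
  simp_rw [hterm]
  exact ⟨(summable_pnat_rpow_neg hs).mul_left _, by
    rw [tsum_mul_left, Complex.ofReal_mul, ofReal_tsum_pnat_rpow_neg hs]⟩

/-- For 1 < m < 5/3, T > Z²/(4m), Z > 0 and
g(λ) = min{(-λ/m)^{1/(m-1)}, 1} for λ < 0, g = 0 otherwise, one has
∑_{j≥1} j² g(-Z²/(4Tj²)) = (Z²/(4Tm))^{1/(m-1)} ζ(2(2-m)/(m-1)) < ∞.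
(The argument of ζ is written so that it exceeds 1; in the paper the sum
∑_j j^{2-2/(m-1)} is identified with this zeta value.) -/
theorem stmt_5 (m T Z : ℝ) (hm1 : 1 < m) (hm53 : m < 5 / 3) (hZ : 0 < Z)
    (hT : Z ^ 2 / (4 * m) < T) (g : ℝ → ℝ)
    (hg_neg : ∀ lam : ℝ, lam < 0 → g lam = min ((-lam / m) ^ (1 / (m - 1))) 1)
    (hg_pos : ∀ lam : ℝ, 0 ≤ lam → g lam = 0) :
    Summable (fun j : ℕ+ => (j : ℝ) ^ 2 * g (-Z ^ 2 / (4 * T * (j : ℝ) ^ 2))) ∧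
    ((∑' j : ℕ+, (j : ℝ) ^ 2 * g (-Z ^ 2 / (4 * T * (j : ℝ) ^ 2)) : ℝ) : ℂ)
      = ((((Z ^ 2 / (4 * T * m)) ^ (1 / (m - 1)) : ℝ)) : ℂ)
        * riemannZeta ((2 * (2 - m) / (m - 1) : ℝ) : ℂ) :=
  stmt_5_general m T Z hm1 hm53 hZ hT g hg_neg
end

section
/- Let β be convex on [0,1] with β(0) = 0 and β ≥ 0, let H be a Hilbert space, γ a self-adjoint operator with 0 ≤ γ ≤ 1 and γ trace-class, and X a self-adjoint operator with X² ≤ 1. Then tr(β(XγX)) ≤ tr(X β(γ) X) (Brown–Kosaki inequality, trace form). -/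
/-!
Write `cᵢⱼ = |⟪uᵢ, X vⱼ⟫|²`. Testing the spectral identity for `XγX` against `vⱼ` and using
`X = X*` gives `mⱼ = ∑ᵢ cᵢⱼ nᵢ`. By Bessel's inequality `∑ᵢ cᵢⱼ ≤ ‖X vⱼ‖² ≤ 1` and
`∑ⱼ cᵢⱼ ≤ ‖X uᵢ‖²`. Since `β(0) = 0`, Jensen's inequality holds for sub-probability weights,
so `β(mⱼ) ≤ ∑ᵢ cᵢⱼ β(nᵢ)`; summing over `j` and exchanging the order of summation gives
`∑ⱼ β(mⱼ) ≤ ∑ᵢ β(nᵢ) ‖X uᵢ‖²`.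
-/

open scoped InnerProductSpace
open Set Filter Topology

namespace ConvexOn

variable {f : ℝ → ℝ}

theorem map_le_mul_map_one (hf : ConvexOn ℝ (Icc 0 1) f) (hf0 : f 0 = 0) {x : ℝ}
    (hx : x ∈ Icc 0 1) : f x ≤ x * f 1 := by
  have h := hf.2 (left_mem_Icc.2 zero_le_one) (right_mem_Icc.2 zero_le_one)
    (sub_nonneg.2 hx.2) hx.1 (sub_add_cancel 1 x)
  simpa [hf0] using h

theorem map_sum_le_of_sum_le_one {ι : Type*} {s : Set ℝ} (hf : ConvexOn ℝ s f)
    (h0s : 0 ∈ s) (hf0 : f 0 = 0) {t : Finset ι} {w p : ι → ℝ} (hw : ∀ i ∈ t, 0 ≤ w i)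
    (hw1 : ∑ i ∈ t, w i ≤ 1) (hp : ∀ i ∈ t, p i ∈ s) :
    f (∑ i ∈ t, w i * p i) ≤ ∑ i ∈ t, w i * f (p i) := by
  simpa [hf0] using hf.map_add_sum_le hw (sub_add_cancel 1 _) hp (sub_nonneg.2 hw1) h0s

theorem map_tsum_le_of_tsum_le_one {ι : Type*} (hf : ConvexOn ℝ (Icc 0 1) f) (hf0 : f 0 = 0)
    (hf_nonneg : ∀ x ∈ Icc (0 : ℝ) 1, 0 ≤ f x) {w x : ι → ℝ} (hw : ∀ i, 0 ≤ w i)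
    (hws : Summable w) (hw1 : ∑' i, w i ≤ 1) (hx : ∀ i, x i ∈ Icc 0 1) :
    f (∑' i, w i * x i) ≤ ∑' i, w i * f (x i) := by
  have hwx_le : ∀ i, w i * x i ≤ w i := fun i => mul_le_of_le_one_right (hw i) (hx i).2
  have hwx_nonneg : ∀ i, 0 ≤ w i * x i := fun i => mul_nonneg (hw i) (hx i).1
  have hwx : Summable fun i => w i * x i := hws.of_nonneg_of_le hwx_nonneg hwx_le
  have hwf_nonneg : ∀ i, 0 ≤ w i * f (x i) := fun i => mul_nonneg (hw i) (hf_nonneg _ (hx i))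
  have hwf : Summable fun i => w i * f (x i) := by
    refine (hws.mul_right (f 1)).of_nonneg_of_le hwf_nonneg fun i => ?_
    have h1 : 0 ≤ f 1 := hf_nonneg 1 (right_mem_Icc.2 zero_le_one)
    have hfx := hf.map_le_mul_map_one hf0 (hx i)
    exact mul_le_mul_of_nonneg_left (hfx.trans (mul_le_of_le_one_left h1 (hx i).2)) (hw i)
  set S := ∑' i, w i * x i
  -- Jensen on `F` plus the point `1` carrying the tail mass `S - ∑_F w x`: this avoids any
  -- continuity of `f` at `S`, which fails when `S = 1` and `f` jumps there.
  have hfin : ∀ F : Finset ι,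
      f S ≤ (S - ∑ i ∈ F, w i * x i) * f 1 + ∑' i, w i * f (x i) := by
    intro F
    set a := S - ∑ i ∈ F, w i * x i
    have ha0 : 0 ≤ a := sub_nonneg.2 (hwx.sum_le_tsum F fun i _ => hwx_nonneg i)
    have ha1 : a + ∑ i ∈ F, w i ≤ 1 := by
      have := (hws.sub hwx).sum_le_tsum F fun i _ => sub_nonneg.2 (hwx_le i)
      rw [Finset.sum_sub_distrib, hws.tsum_sub hwx] at this
      linarith
    have h := hf.map_sum_le_of_sum_le_one (left_mem_Icc.2 zero_le_one) hf0
      (t := Finset.insertNone F) (w := fun i => i.elim a w) (p := fun i => i.elim 1 x)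
      (Finset.forall_mem_insertNone.2 ⟨ha0, fun i _ => hw i⟩) (by simpa using ha1)
      (Finset.forall_mem_insertNone.2 ⟨right_mem_Icc.2 zero_le_one, fun i _ => hx i⟩)
    simp only [Finset.sum_insertNone, Option.elim_none, Option.elim_some, mul_one] at h
    calc f S = f (a + ∑ i ∈ F, w i * x i) := by rw [sub_add_cancel]
      _ ≤ a * f 1 + ∑ i ∈ F, w i * f (x i) := h
      _ ≤ a * f 1 + ∑' i, w i * f (x i) := by
        gcongr; exact hwf.sum_le_tsum F fun i _ => hwf_nonneg i
  have hlim : Tendsto (fun F : Finset ι => (S - ∑ i ∈ F, w i * x i) * f 1 + ∑' i, w i * f (x i))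
      atTop (𝓝 ((S - S) * f 1 + ∑' i, w i * f (x i))) :=
    (((tendsto_const_nhds.sub hwx.hasSum).mul_const _).add_const _)
  rw [sub_self, zero_mul, zero_add] at hlim
  exact ge_of_tendsto' hlim hfin

end ConvexOn

theorem tsum_le_tsum_mul_of_le_tsum_mul {ι κ : Type*} {a : κ → ℝ} {b d : ι → ℝ}
    {c : ι → κ → ℝ} (hc : ∀ i j, 0 ≤ c i j) (hb : ∀ i, 0 ≤ b i)
    (hbd : Summable fun i => b i * d i) (ha : ∀ j, a j ≤ ∑' i, c i j * b i)
    (hd : ∀ i (F : Finset κ), ∑ j ∈ F, c i j ≤ d i) :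
    ∑' j, a j ≤ ∑' i, b i * d i := by
  have hcb_le : ∀ i (F : Finset κ), ∑ j ∈ F, c i j * b i ≤ b i * d i := fun i F => by
    rw [← Finset.sum_mul, mul_comm]; exact mul_le_mul_of_nonneg_left (hd i F) (hb i)
  have hcb_nonneg : ∀ i (F : Finset κ), 0 ≤ ∑ j ∈ F, c i j * b i := fun i F =>
    Finset.sum_nonneg fun j _ => mul_nonneg (hc i j) (hb i)
  have hcb : ∀ F : Finset κ, Summable fun i => ∑ j ∈ F, c i j * b i := fun F =>
    hbd.of_nonneg_of_le (hcb_nonneg · F) (hcb_le · F)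
  have hd_nonneg : ∀ i, 0 ≤ b i * d i := fun i => (hcb_nonneg i ∅).trans (hcb_le i ∅)
  refine tsum_le_of_sum_le' (tsum_nonneg hd_nonneg) fun F => ?_
  calc ∑ j ∈ F, a j ≤ ∑ j ∈ F, ∑' i, c i j * b i := Finset.sum_le_sum fun j _ => ha j
    _ = ∑' i, ∑ j ∈ F, c i j * b i := by
      refine (Summable.tsum_finsetSum fun j _ => ?_).symm
      simpa using hcb {j}
    _ ≤ ∑' i, b i * d i := (hcb F).tsum_le_tsum (hcb_le · F) hbd

namespace Orthonormal

variable {𝕜 E ι : Type*} [RCLike 𝕜] [NormedAddCommGroup E] [InnerProductSpace 𝕜 E]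
  {u : ι → E}

theorem summable_smul_inner_smul [CompleteSpace E] (hu : Orthonormal 𝕜 u) {n : ι → ℝ}
    (hn : Summable n) (ψ : E) : Summable fun i => (n i : 𝕜) • ⟪u i, ψ⟫_𝕜 • u i := by
  refine Summable.of_norm ((hn.abs.mul_right ‖ψ‖).of_nonneg_of_le (fun _ => norm_nonneg _)
    fun i => ?_)
  rw [norm_smul, norm_smul, hu.1 i, mul_one, RCLike.norm_ofReal]
  gcongr
  simpa [hu.1 i] using norm_inner_le_norm (𝕜 := 𝕜) (u i) ψ

theorem inner_tsum_smul_inner_smul [CompleteSpace E] (hu : Orthonormal 𝕜 u) {n : ι → ℝ}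
    (hn : Summable n) (ψ : E) :
    ⟪ψ, ∑' i, (n i : 𝕜) • ⟪u i, ψ⟫_𝕜 • u i⟫_𝕜 = ((∑' i, ‖⟪u i, ψ⟫_𝕜‖ ^ 2 * n i : ℝ) : 𝕜) := by
  have h := (innerSL 𝕜 ψ).map_tsum (hu.summable_smul_inner_smul hn ψ)
  simp only [innerSL_apply_apply] at h
  rw [h, RCLike.ofReal_tsum]
  refine tsum_congr fun i => ?_
  rw [inner_smul_right, inner_smul_right, ← inner_conj_symm ψ (u i), RCLike.mul_conj]
  push_cast
  ring

theorem tsum_smul_inner_smul_self (hu : Orthonormal 𝕜 u) (m : ι → 𝕜) (j : ι) :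
    ∑' k, m k • ⟪u k, u j⟫_𝕜 • u k = m j • u j := by
  rw [tsum_eq_single j fun k hk => by simp [hu.2 hk],
    inner_self_eq_one_of_norm_eq_one (hu.1 j), one_smul]

end Orthonormal

theorem stmt_18_general {H : Type*} [NormedAddCommGroup H] [InnerProductSpace ℂ H]
    [CompleteSpace H]
    (β : ℝ → ℝ) (hconv : ConvexOn ℝ (Set.Icc (0:ℝ) 1) β) (hβ0 : β 0 = 0)
    (hβpos : ∀ ν ∈ Set.Icc (0:ℝ) 1, 0 ≤ β ν)
    (X : H →L[ℂ] H) (hXsa : IsSelfAdjoint X) (hX1 : ∀ ψ, ‖X ψ‖ ≤ ‖ψ‖)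
    (n : ℕ → ℝ) (hn : ∀ i, n i ∈ Set.Icc (0:ℝ) 1) (hnsum : Summable n)
    (u : ℕ → H) (hu : Orthonormal ℂ u)
    (m : ℕ → ℝ)
    (v : ℕ → H) (hv : Orthonormal ℂ v)
    -- XγX = ∑ⱼ mⱼ |vⱼ⟩⟨vⱼ| where γ = ∑ᵢ nᵢ |uᵢ⟩⟨uᵢ|
    (hXγX : ∀ ψ : H, X (∑' i, (n i : ℂ) • ⟪u i, X ψ⟫_ℂ • u i)
        = ∑' j, (m j : ℂ) • ⟪v j, ψ⟫_ℂ • v j) :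
    (∑' j, β (m j)) ≤ ∑' i, β (n i) * ‖X (u i)‖ ^ 2 := by
  have hsym : ∀ a b, ⟪X a, b⟫_ℂ = ⟪a, X b⟫_ℂ :=
    ContinuousLinearMap.isSelfAdjoint_iff_isSymmetric.1 hXsa
  have hX_sq : ∀ w : ℕ → H, Orthonormal ℂ w → ∀ i, ‖X (w i)‖ ^ 2 ≤ 1 := fun w hw i =>
    pow_le_one₀ (norm_nonneg _) (by simpa [hw.1 i] using hX1 (w i))
  have hm_eq : ∀ j, m j = ∑' i, ‖⟪u i, X (v j)⟫_ℂ‖ ^ 2 * n i := by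
    intro j
    have h : ((∑' i, ‖⟪u i, X (v j)⟫_ℂ‖ ^ 2 * n i : ℝ) : ℂ) = m j :=
      calc _ = ⟪X (v j), ∑' i, (n i : ℂ) • ⟪u i, X (v j)⟫_ℂ • u i⟫_ℂ :=
            (hu.inner_tsum_smul_inner_smul hnsum _).symm
        _ = ⟪v j, ∑' k, (m k : ℂ) • ⟪v k, v j⟫_ℂ • v k⟫_ℂ := by rw [hsym, hXγX]
        _ = m j := by
          rw [hv.tsum_smul_inner_smul_self, inner_smul_right,
            inner_self_eq_one_of_norm_eq_one (hv.1 j), mul_one]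
    exact_mod_cast h.symm
  refine tsum_le_tsum_mul_of_le_tsum_mul (c := fun i j => ‖⟪u i, X (v j)⟫_ℂ‖ ^ 2)
    (fun i j => by positivity) (fun i => hβpos _ (hn i)) ?_ (fun j => ?_) (fun i F => ?_)
  · refine (hnsum.mul_right (β 1)).of_nonneg_of_le
      (fun i => mul_nonneg (hβpos _ (hn i)) (by positivity)) fun i => ?_
    exact (mul_le_of_le_one_right (hβpos _ (hn i)) (hX_sq u hu i)).trans
      (hconv.map_le_mul_map_one hβ0 (hn i))
  · rw [hm_eq j]
    exact hconv.map_tsum_le_of_tsum_le_one hβ0 hβpos (fun i => by positivity)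
      (hu.inner_products_summable _) ((hu.tsum_inner_products_le _).trans (hX_sq v hv j)) hn
  · calc ∑ j ∈ F, ‖⟪u i, X (v j)⟫_ℂ‖ ^ 2 = ∑ j ∈ F, ‖⟪v j, X (u i)⟫_ℂ‖ ^ 2 := by
          refine Finset.sum_congr rfl fun j _ => ?_
          rw [← hsym, norm_inner_symm]
      _ ≤ ‖X (u i)‖ ^ 2 := hv.sum_inner_products_le _

/-- Brown–Kosaki inequality in trace form. Let β be convex on
[0,1] with β(0) = 0, β ≥ 0, let γ = ∑ᵢ nᵢ |uᵢ⟩⟨uᵢ| be a trace-class operator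
with 0 ≤ γ ≤ 1 on a Hilbert space H, and let X be self-adjoint with X² ≤ 1
(equivalently ‖Xψ‖ ≤ ‖ψ‖). If XγX = ∑ⱼ mⱼ |vⱼ⟩⟨vⱼ| is a spectral
decomposition of XγX, then
tr β(XγX) = ∑ⱼ β(mⱼ) ≤ ∑ᵢ β(nᵢ)‖X uᵢ‖² = tr(X β(γ) X). -/
theorem stmt_18 {H : Type*} [NormedAddCommGroup H] [InnerProductSpace ℂ H]
    [CompleteSpace H]
    (β : ℝ → ℝ) (hconv : ConvexOn ℝ (Set.Icc (0:ℝ) 1) β) (hβ0 : β 0 = 0)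
    (hβpos : ∀ ν ∈ Set.Icc (0:ℝ) 1, 0 ≤ β ν)
    (X : H →L[ℂ] H) (hXsa : IsSelfAdjoint X) (hX1 : ∀ ψ, ‖X ψ‖ ≤ ‖ψ‖)
    (n : ℕ → ℝ) (hn : ∀ i, n i ∈ Set.Icc (0:ℝ) 1) (hnsum : Summable n)
    (u : ℕ → H) (hu : Orthonormal ℂ u)
    (m : ℕ → ℝ) (hm : ∀ j, m j ∈ Set.Icc (0:ℝ) 1) (hmsum : Summable m)
    (v : ℕ → H) (hv : Orthonormal ℂ v)
    -- XγX = ∑ⱼ mⱼ |vⱼ⟩⟨vⱼ| where γ = ∑ᵢ nᵢ |uᵢ⟩⟨uᵢ|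
    (hXγX : ∀ ψ : H, X (∑' i, (n i : ℂ) • ⟪u i, X ψ⟫_ℂ • u i)
        = ∑' j, (m j : ℂ) • ⟪v j, ψ⟫_ℂ • v j) :
    (∑' j, β (m j)) ≤ ∑' i, β (n i) * ‖X (u i)‖ ^ 2 :=
  stmt_18_general β hconv hβ0 hβpos X hXsa hX1 n hn hnsum u hu m v hv hXγX
end
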